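/- Let μ be a Radon measure on ℝ^d, let D be the standard dyadic lattice of ℝ^d, and let {a_Q}_{Q∈D} be non-negative numbers such that for every R ∈ D one has ∑_{Q∈D : Q⊆R} a_Q ≤ c₃ μ(R). Then for every p ∈ (1,∞) there is a constant c, depending only on p and d, such that for every f ∈ L^p(μ), ∑_{Q∈D} |m_Q f|^p a_Q ≤ c c₃ ‖f‖_{L^p(μ)}^p. -/

import Mathlib

open MeasureTheory Set ENNReal

noncomputable section

/-- The support of a measure on `ℝ^d`: points all of whose balls have positive measure. -/
def msupport {d : ℕ} (μ : Measure (EuclideanSpace ℝ (Fin d))) : Set (EuclideanSpace ℝ (Fin d)) :=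
  {x | ∀ r : ℝ, 0 < r → 0 < μ (Metric.ball x r)}

/-- `μ` is `n`-dimensional Ahlfors–David regular with constant `C`. -/
def IsADRegular {d : ℕ} (n : ℕ) (μ : Measure (EuclideanSpace ℝ (Fin d))) (C : ℝ) : Prop :=
  1 ≤ C ∧ ∀ x ∈ msupport μ, ∀ r : ℝ, 0 < r → ENNReal.ofReal r ≤ EMetric.diam (msupport μ) →
    ENNReal.ofReal (C⁻¹ * r ^ n) ≤ μ (Metric.closedBall x r) ∧
      μ (Metric.closedBall x r) ≤ ENNReal.ofReal (C * r ^ n)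

/-- `μ` is uniformly `n`-rectifiable, with AD-regularity constant `C` and parameters `θ`, `M`. -/
def IsUnifRectifiable {d : ℕ} (n : ℕ) (μ : Measure (EuclideanSpace ℝ (Fin d)))
    (C θ M : ℝ) : Prop :=
  IsADRegular n μ C ∧ 0 < θ ∧ 0 < M ∧
    ∀ x ∈ msupport μ, ∀ r : ℝ, 0 < r → ENNReal.ofReal r ≤ EMetric.diam (msupport μ) →
      ∃ g : EuclideanSpace ℝ (Fin n) → EuclideanSpace ℝ (Fin d),
        LipschitzWith (Real.toNNReal M) g ∧
          ENNReal.ofReal (θ * r ^ n) ≤ μ (Metric.closedBall x r ∩ g '' Metric.closedBall 0 r)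

/-- `K` is an odd `n`-dimensional Calderón–Zygmund kernel with constant `C`. -/
def IsCZKernel {d : ℕ} (n : ℕ) (K : EuclideanSpace ℝ (Fin d) → ℝ) (C : ℝ) : Prop :=
  0 < C ∧ ContDiffOn ℝ 2 K {(0 : EuclideanSpace ℝ (Fin d))}ᶜ ∧
    (∀ x : EuclideanSpace ℝ (Fin d), x ≠ 0 → K (-x) = -K x) ∧
    (∀ x : EuclideanSpace ℝ (Fin d), x ≠ 0 → |K x| ≤ C / ‖x‖ ^ n) ∧
    (∀ x : EuclideanSpace ℝ (Fin d), x ≠ 0 → ‖fderiv ℝ K x‖ ≤ C / ‖x‖ ^ (n + 1)) ∧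
    (∀ x : EuclideanSpace ℝ (Fin d), x ≠ 0 → ‖fderiv ℝ (fderiv ℝ K) x‖ ≤ C / ‖x‖ ^ (n + 2))

/-- The truncated singular integral `T_ε^μ f (x)`. -/
def Tmu {d : ℕ} (K : EuclideanSpace ℝ (Fin d) → ℝ) (μ : Measure (EuclideanSpace ℝ (Fin d)))
    (f : EuclideanSpace ℝ (Fin d) → ℝ) (ε : ℝ) (x : EuclideanSpace ℝ (Fin d)) : ℝ :=
  ∫ y in {y | ε < dist x y}, K (x - y) * f y ∂μ

/-- The truncated singular integral `T_ε ν (x)` of a finite signed measure `ν`. -/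
def Tnu {d : ℕ} (K : EuclideanSpace ℝ (Fin d) → ℝ)
    (ν : SignedMeasure (EuclideanSpace ℝ (Fin d))) (ε : ℝ) (x : EuclideanSpace ℝ (Fin d)) : ℝ :=
  (∫ y in {y | ε < dist x y}, K (x - y) ∂ν.toJordanDecomposition.posPart)
    - ∫ y in {y | ε < dist x y}, K (x - y) ∂ν.toJordanDecomposition.negPart

/-- The (untruncated) integral `∫ K(x-y) dν(y)` against a finite signed measure. -/
def Tfull {d : ℕ} (K : EuclideanSpace ℝ (Fin d) → ℝ)
    (ν : SignedMeasure (EuclideanSpace ℝ (Fin d))) (x : EuclideanSpace ℝ (Fin d)) : ℝ :=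
  (∫ y, K (x - y) ∂ν.toJordanDecomposition.posPart)
    - ∫ y, K (x - y) ∂ν.toJordanDecomposition.negPart

/-- The smoothly truncated singular integral `T_{φ_ε} ν (x)`. -/
def Tphi {d : ℕ} (K : EuclideanSpace ℝ (Fin d) → ℝ) (φ : ℝ → ℝ)
    (ν : SignedMeasure (EuclideanSpace ℝ (Fin d))) (ε : ℝ) (x : EuclideanSpace ℝ (Fin d)) : ℝ :=
  (∫ y, φ (‖x - y‖ ^ 2 / ε ^ 2) * K (x - y) ∂ν.toJordanDecomposition.posPart)
    - ∫ y, φ (‖x - y‖ ^ 2 / ε ^ 2) * K (x - y) ∂ν.toJordanDecomposition.negPart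

/-- The ρ-variation of the family `ε ↦ g ε` over non-increasing positive sequences. -/
def variation (ρ : ℝ) {E : Type*} [NormedAddCommGroup E] (g : ℝ → E) : ℝ≥0∞ :=
  ⨆ (ε : ℤ → ℝ) (_ : Antitone ε) (_ : ∀ m, 0 < ε m),
    (∑' m : ℤ, ENNReal.ofReal ‖g (ε m) - g (ε (m + 1))‖ ^ ρ) ^ (1 / ρ)

/-- The dyadic interval `I_k = [2^{-k-1}, 2^{-k})`. -/
def Ik (k : ℤ) : Set ℝ := Set.Ico ((2 : ℝ) ^ (-k - 1)) ((2 : ℝ) ^ (-k))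

/-- The short ρ-variation of the family `ε ↦ g ε`. -/
def shortVariation (ρ : ℝ) (g : ℝ → ℝ) : ℝ≥0∞ :=
  ⨆ (ε : ℤ → ℝ) (_ : Antitone ε) (_ : ∀ m, 0 < ε m),
    (∑' k : ℤ, ∑' m : ℤ,
      Set.indicator {m : ℤ | ε m ∈ Ik k ∧ ε (m + 1) ∈ Ik k}
        (fun m => ENNReal.ofReal |g (ε m) - g (ε (m + 1))| ^ ρ) m) ^ (1 / ρ)

/-- The long ρ-variation of the family `ε ↦ g ε`. -/
def longVariation (ρ : ℝ) (g : ℝ → ℝ) : ℝ≥0∞ :=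
  ⨆ (ε : ℤ → ℝ) (_ : Antitone ε) (_ : ∀ m, 0 < ε m),
    (∑' m : ℤ,
      Set.indicator {m : ℤ | ∃ j k : ℤ, j < k ∧ ε m ∈ Ik j ∧ ε (m + 1) ∈ Ik k}
        (fun m => ENNReal.ofReal |g (ε m) - g (ε (m + 1))| ^ ρ) m) ^ (1 / ρ)

/-- `φ` is an admissible smooth cutoff: non-decreasing, `C²`, with
`χ_{[4,∞)} ≤ φ ≤ χ_{[1/4,∞)}`. -/
def IsCutoff (φ : ℝ → ℝ) : Prop :=
  Monotone φ ∧ ContDiff ℝ 2 φ ∧ (∀ t, 0 ≤ φ t) ∧ (∀ t, φ t ≤ 1) ∧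
    (∀ t, 4 ≤ t → 1 ≤ φ t) ∧ ∀ t, t < 1 / 4 → φ t ≤ 0

/-- The truncated `n`-dimensional Riesz transform `R^μ_ε f (x)`. -/
def rieszT {d : ℕ} (n : ℕ) (μ : Measure (EuclideanSpace ℝ (Fin d)))
    (f : EuclideanSpace ℝ (Fin d) → ℝ) (ε : ℝ) (x : EuclideanSpace ℝ (Fin d)) :
    EuclideanSpace ℝ (Fin d) :=
  ∫ y in {y | ε < dist x y}, (f y / ‖x - y‖ ^ (n + 1)) • (x - y) ∂μ

/-- The closed axis-parallel cube with center `z` and side length `ℓ`. -/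
def cube {d : ℕ} (z : EuclideanSpace ℝ (Fin d)) (ℓ : ℝ) : Set (EuclideanSpace ℝ (Fin d)) :=
  {y | ∀ i, |y i - z i| ≤ ℓ / 2}

/-- The standard half-open dyadic cube `2^{-j}(k + [0,1)^d)` indexed by `Q = (j, k)`. -/
def dyadicCube (d : ℕ) (Q : ℤ × (Fin d → ℤ)) : Set (EuclideanSpace ℝ (Fin d)) :=
  {x | ∀ i, (2 : ℝ) ^ (-Q.1) * Q.2 i ≤ x i ∧ x i < (2 : ℝ) ^ (-Q.1) * (Q.2 i + 1)}

/-- The μ-mean of `f` over `S` (with value `0` if `μ S` is zero or infinite). -/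
def mQ {d : ℕ} (μ : Measure (EuclideanSpace ℝ (Fin d))) (S : Set (EuclideanSpace ℝ (Fin d)))
    (f : EuclideanSpace ℝ (Fin d) → ℝ) : ℝ :=
  (∫ x in S, f x ∂μ) / (μ S).toReal

/-- The centered Hardy–Littlewood maximal function of `g` w.r.t. `μ`. -/
def maximalFn {d : ℕ} (μ : Measure (EuclideanSpace ℝ (Fin d)))
    (g : EuclideanSpace ℝ (Fin d) → ℝ) (y : EuclideanSpace ℝ (Fin d)) : ℝ≥0∞ :=
  ⨆ (R : ℝ) (_ : 0 < R),
    (∫⁻ w in Metric.closedBall y R, (‖g w‖₊ : ℝ≥0∞) ∂μ) / μ (Metric.closedBall y R)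

/-- The weight `w_j = χ_{Q_j} (∑_k χ_{Q_k})⁻¹` associated to a family of cubes. -/
def wfun {d : ℕ} (J : Set ℕ) (Q : ℕ → Set (EuclideanSpace ℝ (Fin d))) (j : ℕ)
    (x : EuclideanSpace ℝ (Fin d)) : ℝ :=
  (Q j).indicator (fun _ => (∑' k : J, (Q (k : ℕ)).indicator (fun _ => (1 : ℝ)) x)⁻¹) x

/-!
Group the cubes by the size of their `|f|`-average. If `⨍_Q |f| > 2^{m+1}`, then at least half
of `∫_Q |f|` lives where `|f| > 2^m`, so `μ(Q) ≤ 2^{-m} ∫_Q |f| 1_{|f| > 2^m}`. The maximal such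
cubes are disjoint, and the packing condition applied to each of them bounds `∑ a_Q` over the
whole group by `c₃ 2^{-m} ∫ |f| 1_{|f| > 2^m}`. Summing over `m` with weights `2^{(m+2)p}` leaves,
at each point `x`, a geometric series in `2^{m(p-1)}` over `2^m < |f(x)|`, which is
`≲ |f(x)|^{p-1}`.
-/

theorem mem_dyadicCube_iff_floor {d : ℕ} {Q : ℤ × (Fin d → ℤ)} {x : EuclideanSpace ℝ (Fin d)} :
    x ∈ dyadicCube d Q ↔ ∀ i, ⌊(2 : ℝ) ^ Q.1 * x i⌋ = Q.2 i := by
  have h2 : (0 : ℝ) < 2 ^ Q.1 := by positivity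
  simp only [dyadicCube, mem_ofPred_eq, Int.floor_eq_iff, zpow_neg, inv_mul_le_iff₀ h2,
    lt_inv_mul_iff₀ h2]

theorem floor_zpow_mul_of_mem_dyadicCube {d : ℕ} {Q : ℤ × (Fin d → ℤ)}
    {x : EuclideanSpace ℝ (Fin d)} (hx : x ∈ dyadicCube d Q) {j : ℤ} (hj : j ≤ Q.1) (i : Fin d) :
    ⌊(2 : ℝ) ^ j * x i⌋ = Q.2 i / 2 ^ (Q.1 - j).toNat := by
  have hscale : (2 : ℝ) ^ j * x i = 2 ^ Q.1 * x i / ((2 ^ (Q.1 - j).toNat : ℕ) : ℝ) := by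
    rw [Nat.cast_pow, Nat.cast_ofNat, ← zpow_natCast, Int.toNat_of_nonneg (sub_nonneg.2 hj),
      zpow_sub₀ two_ne_zero]
    field_simp
  rw [hscale, Int.floor_div_natCast, mem_dyadicCube_iff_floor.1 hx i]
  push_cast
  rfl

theorem dyadicCube_subset_or_disjoint_of_le {d : ℕ} {Q R : ℤ × (Fin d → ℤ)} (h : R.1 ≤ Q.1) :
    dyadicCube d Q ⊆ dyadicCube d R ∨ Disjoint (dyadicCube d Q) (dyadicCube d R) := by
  by_cases hQR : ∀ i, Q.2 i / 2 ^ (Q.1 - R.1).toNat = R.2 i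
  · refine Or.inl fun x hx => mem_dyadicCube_iff_floor.2 fun i => ?_
    rw [floor_zpow_mul_of_mem_dyadicCube hx h, hQR]
  · obtain ⟨i, hi⟩ := not_forall.1 hQR
    refine Or.inr (disjoint_left.2 fun x hxQ hxR => hi ?_)
    rw [← floor_zpow_mul_of_mem_dyadicCube hxQ h, mem_dyadicCube_iff_floor.1 hxR i]

theorem dyadicCube_subset_or_subset_or_disjoint {d : ℕ} (Q R : ℤ × (Fin d → ℤ)) :
    dyadicCube d Q ⊆ dyadicCube d R ∨ dyadicCube d R ⊆ dyadicCube d Q ∨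
      Disjoint (dyadicCube d Q) (dyadicCube d R) := by
  rcases le_total R.1 Q.1 with h | h
  · exact (dyadicCube_subset_or_disjoint_of_le h).imp_right Or.inr
  · rcases dyadicCube_subset_or_disjoint_of_le h with h' | h'
    · exact Or.inr (Or.inl h')
    · exact Or.inr (Or.inr h'.symm)

theorem measurableSet_dyadicCube {d : ℕ} (Q : ℤ × (Fin d → ℤ)) :
    MeasurableSet (dyadicCube d Q) := by
  have : dyadicCube d Q = ⋂ i, (fun x : EuclideanSpace ℝ (Fin d) => x i) ⁻¹'
      Ico ((2 : ℝ) ^ (-Q.1) * Q.2 i) ((2 : ℝ) ^ (-Q.1) * (Q.2 i + 1)) := by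
    ext x
    simp [dyadicCube]
  rw [this]
  exact MeasurableSet.iInter fun i =>
    (EuclideanSpace.proj i).continuous.measurable measurableSet_Ico

theorem pairwiseDisjoint_maximal_of_laminar {X : Type*} {C : Set (Set X)}
    (hC : ∀ s ∈ C, ∀ t ∈ C, s ⊆ t ∨ t ⊆ s ∨ Disjoint s t) :
    {t | Maximal (· ∈ C) t}.PairwiseDisjoint id := by
  intro s hs t ht hst
  rcases hC s hs.prop t ht.prop with h | h | h
  · exact absurd (hs.eq_of_le ht.prop h) hst
  · exact absurd (ht.eq_of_le hs.prop h).symm hst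
  · exact h

section Packing

variable {X ι : Type*} [MeasurableSpace X] {μ : Measure X} {D : ι → Set X} {a : ι → ℝ≥0∞}
  {C : ℝ≥0∞}

theorem sum_le_mul_lintegral_of_packing
    (hlam : ∀ Q R, D Q ⊆ D R ∨ D R ⊆ D Q ∨ Disjoint (D Q) (D R))
    (hD : ∀ Q, MeasurableSet (D Q)) (hpack : ∀ R, ∑' Q : {Q // D Q ⊆ D R}, a Q ≤ C * μ (D R))
    {G : X → ℝ≥0∞} (S : Finset ι) (hG : ∀ Q ∈ S, μ (D Q) ≤ ∫⁻ x in D Q, G x ∂μ) :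
    ∑ Q ∈ S, a Q ≤ C * ∫⁻ x, G x ∂μ := by
  classical
  set T := (S.image D).filter (Maximal (· ∈ S.image D))
  have hT : (T : Set (Set X)).PairwiseDisjoint id := by
    refine (pairwiseDisjoint_maximal_of_laminar (C := (S.image D : Set (Set X))) ?_).subset
      fun t ht => (Finset.mem_filter.1 ht).2
    intro s hs t ht
    obtain ⟨Q, -, rfl⟩ := Finset.mem_image.1 hs
    obtain ⟨R, -, rfl⟩ := Finset.mem_image.1 ht
    exact hlam Q R
  have hcover : ∀ Q ∈ S, ∃ t ∈ T, D Q ⊆ t := by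
    intro Q hQ
    obtain ⟨t, hle, hmax⟩ := (S.image D).exists_le_maximal (Finset.mem_image_of_mem D hQ)
    exact ⟨t, Finset.mem_filter.2 ⟨hmax.prop, hmax⟩, hle⟩
  choose! φ hφT hφ using hcover
  have hfiber : ∀ t ∈ T, ∑ Q ∈ S with φ Q = t, a Q ≤ C * ∫⁻ x in t, G x ∂μ := by
    intro t ht
    obtain ⟨R, hR, rfl⟩ := Finset.mem_image.1 (Finset.mem_filter.1 ht).1
    calc ∑ Q ∈ S with φ Q = D R, a Q
        = ∑ Q ∈ S with φ Q = D R, {Q | D Q ⊆ D R}.indicator a Q := by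
          refine Finset.sum_congr rfl fun Q hQ => (indicator_of_mem ?_ a).symm
          obtain ⟨hQS, hQR⟩ := Finset.mem_filter.1 hQ
          exact hQR ▸ hφ Q hQS
      _ ≤ ∑' Q, {Q | D Q ⊆ D R}.indicator a Q := ENNReal.sum_le_tsum _
      _ = ∑' Q : {Q // D Q ⊆ D R}, a Q := (tsum_subtype {Q | D Q ⊆ D R} a).symm
      _ ≤ C * ∫⁻ x in D R, G x ∂μ := (hpack R).trans (by gcongr; exact hG R hR)
  calc ∑ Q ∈ S, a Q = ∑ t ∈ T, ∑ Q ∈ S with φ Q = t, a Q :=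
        (Finset.sum_fiberwise_of_maps_to hφT a).symm
    _ ≤ ∑ t ∈ T, C * ∫⁻ x in t, G x ∂μ := Finset.sum_le_sum hfiber
    _ = C * ∫⁻ x in ⋃ t ∈ T, t, G x ∂μ := by
        rw [← Finset.mul_sum]
        refine congrArg (C * ·) (lintegral_biUnion_finset hT (fun t ht => ?_) G).symm
        obtain ⟨R, -, rfl⟩ := Finset.mem_image.1 (Finset.mem_filter.1 ht).1
        exact hD R
    _ ≤ C * ∫⁻ x, G x ∂μ := mul_le_mul_right (setLIntegral_le_lintegral _ _) C

theorem tsum_indicator_le_mul_lintegral_of_packing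
    (hlam : ∀ Q R, D Q ⊆ D R ∨ D R ⊆ D Q ∨ Disjoint (D Q) (D R))
    (hD : ∀ Q, MeasurableSet (D Q)) (hpack : ∀ R, ∑' Q : {Q // D Q ⊆ D R}, a Q ≤ C * μ (D R))
    {G : X → ℝ≥0∞} {P : Set ι} (hG : ∀ Q ∈ P, μ (D Q) ≤ ∫⁻ x in D Q, G x ∂μ) :
    ∑' Q, P.indicator a Q ≤ C * ∫⁻ x, G x ∂μ := by
  classical
  rw [ENNReal.tsum_eq_iSup_sum]
  refine iSup_le fun S => ?_
  simp only [indicator_apply]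
  rw [← Finset.sum_filter]
  exact sum_le_mul_lintegral_of_packing hlam hD hpack _ fun Q hQ => hG Q (Finset.mem_filter.1 hQ).2

end Packing

section Averages

variable {X : Type*} [MeasurableSpace X] {μ : Measure X}

theorem setLAverage_enorm_ne_top {E : Type*} [NormedAddCommGroup E] {f : X → E} {p : ℝ≥0∞}
    (hp : 1 ≤ p) (hf : MemLp f p μ) (S : Set X) : ⨍⁻ x in S, ‖f x‖ₑ ∂μ ≠ ∞ := by
  by_cases hS : μ S = ∞
  · simp [setLAverage_eq, hS]
  have := isFiniteMeasure_restrict.2 hS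
  exact (laverage_lt_top ((hf.restrict S).integrable hp).2.ne).ne

theorem measure_le_lintegral_inv_mul_indicator_of_lt_setLAverage {F : X → ℝ≥0∞} {S : Set X}
    {t : ℝ≥0∞} (ht : t ≠ 0) (hS : 2 * t < ⨍⁻ x in S, F x ∂μ) :
    μ S ≤ ∫⁻ x in S, t⁻¹ * {x | t < F x}.indicator F x ∂μ := by
  have hμS : μ S ≠ ∞ := by
    intro h
    simp [setLAverage_eq, h] at hS
  have htop : t ≠ ∞ := by
    rintro rfl
    simp at hS
  have hsplit : ∫⁻ x in S, F x ∂μ ≤ ∫⁻ x in S, {x | t < F x}.indicator F x ∂μ + t * μ S := by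
    rw [← setLIntegral_const, ← lintegral_add_right _ measurable_const]
    refine lintegral_mono fun x => ?_
    by_cases hx : t < F x
    · simp [indicator_of_mem (show x ∈ {x | t < F x} from hx)]
    · rw [indicator_of_notMem (show x ∉ {x | t < F x} from hx), zero_add]
      exact not_lt.1 hx
  have hlt : t * μ S < ∫⁻ x in S, {x | t < F x}.indicator F x ∂μ := by
    rw [setLAverage_eq, ENNReal.lt_div_iff_mul_lt (Or.inr (ENNReal.mul_ne_top ofNat_ne_top htop))
      (Or.inl hμS), two_mul, add_mul] at hS
    exact (ENNReal.add_lt_add_iff_right (ENNReal.mul_ne_top htop hμS)).1 (hS.trans_le hsplit)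
  calc μ S = t⁻¹ * (t * μ S) := by rw [← mul_assoc, ENNReal.inv_mul_cancel ht htop, one_mul]
    _ ≤ t⁻¹ * ∫⁻ x in S, {x | t < F x}.indicator F x ∂μ := by gcongr
    _ = ∫⁻ x in S, t⁻¹ * {x | t < F x}.indicator F x ∂μ :=
        (lintegral_const_mul' _ _ (ENNReal.inv_ne_top.2 ht)).symm

end Averages

theorem ofReal_abs_mQ_le_setLAverage {d : ℕ} (μ : Measure (EuclideanSpace ℝ (Fin d)))
    (S : Set (EuclideanSpace ℝ (Fin d))) (f : EuclideanSpace ℝ (Fin d) → ℝ) :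
    ENNReal.ofReal |mQ μ S f| ≤ ⨍⁻ x in S, ‖f x‖ₑ ∂μ := by
  rcases eq_or_ne (μ S).toReal 0 with h0 | h0
  · simp [mQ, h0]
  have hS : μ S ≠ ∞ := fun h => h0 (by simp [h])
  have hpos : 0 < (μ S).toReal := lt_of_le_of_ne toReal_nonneg (Ne.symm h0)
  rw [mQ, abs_div, abs_of_pos hpos, ENNReal.ofReal_div_of_pos hpos, ofReal_toReal hS,
    ← Real.enorm_eq_ofReal_abs, setLAverage_eq]
  exact ENNReal.div_le_div_right (enorm_integral_le_lintegral_enorm _) _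

theorem rpow_le_tsum_indicator_zpow {A : ℝ≥0∞} (hA : A ≠ ∞) {p : ℝ} (hp : 0 < p) :
    A ^ p ≤ ∑' m : ℤ, {m : ℤ | 2 * 2 ^ m < A}.indicator (fun m => (4 * (2 : ℝ≥0∞) ^ m) ^ p) m := by
  rcases eq_or_ne A 0 with rfl | hA0
  · simp [zero_rpow_of_pos hp]
  obtain ⟨n, hnA, hAn⟩ := exists_mem_Ioc_zpow hA0 hA one_lt_two ofNat_ne_top
  have hzpow : ∀ k : ℤ, (2 : ℝ≥0∞) ^ (k + (n - 1)) = 2 ^ k * 2 ^ (n - 1) :=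
    fun k => ENNReal.zpow_add two_ne_zero ofNat_ne_top k _
  have hmem : n - 1 ∈ {m : ℤ | 2 * 2 ^ m < A} := by
    calc 2 * 2 ^ (n - 1) = (2 : ℝ≥0∞) ^ (1 : ℤ) * 2 ^ (n - 1) := by rw [zpow_one]
      _ = 2 ^ n := by rw [← hzpow, add_sub_cancel]
      _ < A := hnA
  refine le_trans ?_ (ENNReal.le_tsum (n - 1))
  rw [indicator_of_mem hmem, show (4 : ℝ≥0∞) = 2 ^ (2 : ℤ) by norm_num, ← hzpow]
  gcongr
  exact hAn.trans_eq (by ring_nf)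

theorem tsum_indicator_zpow_rpow_le {q : ℝ} (hq : 0 < q) (s : ℝ≥0∞) :
    ∑' m : ℤ, {m : ℤ | 2 ^ m < s}.indicator (fun m => ((2 : ℝ≥0∞) ^ m) ^ q) m
      ≤ (1 - 2⁻¹ ^ q)⁻¹ * s ^ q := by
  rcases eq_or_ne s ∞ with rfl | hs
  · have : (1 - (2 : ℝ≥0∞)⁻¹ ^ q)⁻¹ ≠ 0 := ENNReal.inv_ne_zero.2 (by simp)
    simp [top_rpow_of_pos hq, this]
  rcases eq_or_ne s 0 with rfl | hs0
  · simp
  obtain ⟨M, hMs, hsM⟩ := exists_mem_Ioc_zpow hs0 hs one_lt_two ofNat_ne_top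
  have hsupp : Function.support ({m : ℤ | 2 ^ m < s}.indicator fun m => ((2 : ℝ≥0∞) ^ m) ^ q)
      ⊆ range fun k : ℕ => M - k := by
    intro m hm
    have hm' : (2 : ℝ≥0∞) ^ m < s := by
      by_contra h
      exact hm (indicator_of_notMem (show m ∉ {m : ℤ | 2 ^ m < s} from h) _)
    have hmM : m ≤ M := by
      by_contra! h
      exact (hsM.trans (ENNReal.zpow_le_of_le one_le_two h)).not_gt hm'
    exact ⟨(M - m).toNat, by simp only; omega⟩
  have hterm : ∀ k : ℕ, ((2 : ℝ≥0∞) ^ (M - k)) ^ q = (2 ^ M) ^ q * (2⁻¹ ^ q) ^ k := fun k => by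
    rw [ENNReal.zpow_sub two_ne_zero ofNat_ne_top, zpow_natCast, ENNReal.inv_pow,
      ENNReal.mul_rpow_of_nonneg _ _ hq.le, ← ENNReal.rpow_natCast, ← ENNReal.rpow_mul,
      mul_comm (k : ℝ) q, ENNReal.rpow_mul, ENNReal.rpow_natCast]
  rw [← (show Function.Injective fun k : ℕ => M - k from fun k l h => by simpa using h).tsum_eq
    hsupp]
  calc ∑' k : ℕ, {m : ℤ | 2 ^ m < s}.indicator (fun m => ((2 : ℝ≥0∞) ^ m) ^ q) (M - k)
      ≤ ∑' k : ℕ, (2 ^ M) ^ q * (2⁻¹ ^ q) ^ k :=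
        ENNReal.tsum_le_tsum fun k => (indicator_le_self _ _ _).trans_eq (hterm k)
    _ = (2 ^ M) ^ q * (1 - 2⁻¹ ^ q)⁻¹ := by rw [ENNReal.tsum_mul_left, ENNReal.tsum_geometric]
    _ ≤ (1 - 2⁻¹ ^ q)⁻¹ * s ^ q := by
        rw [mul_comm]
        gcongr

def carlesonConst (p : ℝ) : ℝ≥0∞ := 4 ^ p * (1 - 2⁻¹ ^ (p - 1))⁻¹

theorem carlesonConst_ne_zero (p : ℝ) : carlesonConst p ≠ 0 :=
  mul_ne_zero (by simp) (ENNReal.inv_ne_zero.2 (by simp))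

theorem carlesonConst_ne_top {p : ℝ} (hp : 1 < p) : carlesonConst p ≠ ∞ := by
  refine ENNReal.mul_ne_top (rpow_ne_top_of_nonneg (by linarith) ofNat_ne_top)
    (ENNReal.inv_ne_top.2 (tsub_pos_iff_lt.2 ?_).ne')
  exact ENNReal.rpow_lt_one (by norm_num) (by linarith)

theorem tsum_zpow_mul_indicator_le {X : Type*} {p : ℝ} (hp : 1 < p) (F : X → ℝ≥0∞) (x : X) :
    ∑' m : ℤ, (4 * (2 : ℝ≥0∞) ^ m) ^ p * ((2 ^ m)⁻¹ * {x | 2 ^ m < F x}.indicator F x)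
      ≤ carlesonConst p * F x ^ p := by
  have hterm : ∀ m : ℤ, (4 * (2 : ℝ≥0∞) ^ m) ^ p * ((2 ^ m)⁻¹ * {x | 2 ^ m < F x}.indicator F x)
      = 4 ^ p *
        ({m : ℤ | 2 ^ m < F x}.indicator (fun m => ((2 : ℝ≥0∞) ^ m) ^ (p - 1)) m * F x) := by
    intro m
    by_cases h : (2 : ℝ≥0∞) ^ m < F x
    · rw [indicator_of_mem (show x ∈ {x | 2 ^ m < F x} from h),
        indicator_of_mem (show m ∈ {m : ℤ | 2 ^ m < F x} from h),
        ENNReal.mul_rpow_of_nonneg _ _ (by linarith),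
        ENNReal.rpow_sub _ _ (ENNReal.zpow_pos two_ne_zero ofNat_ne_top m).ne'
          (ENNReal.zpow_ne_top two_ne_zero ofNat_ne_top m), ENNReal.rpow_one, div_eq_mul_inv]
      ring
    · rw [indicator_of_notMem (show x ∉ {x | 2 ^ m < F x} from h),
        indicator_of_notMem (show m ∉ {m : ℤ | 2 ^ m < F x} from h)]
      simp
  have hpow : F x ^ (p - 1) * F x = F x ^ p := by
    conv_rhs => rw [show p = (p - 1) + 1 by ring,
      ENNReal.rpow_add_of_nonneg _ _ (by linarith) zero_le_one, ENNReal.rpow_one]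
  calc ∑' m : ℤ, (4 * (2 : ℝ≥0∞) ^ m) ^ p * ((2 ^ m)⁻¹ * {x | 2 ^ m < F x}.indicator F x)
      = 4 ^ p * ((∑' m : ℤ,
          {m : ℤ | 2 ^ m < F x}.indicator (fun m => ((2 : ℝ≥0∞) ^ m) ^ (p - 1)) m) * F x) := by
        simp_rw [hterm, ENNReal.tsum_mul_left, ENNReal.tsum_mul_right]
    _ ≤ 4 ^ p * ((1 - 2⁻¹ ^ (p - 1))⁻¹ * F x ^ (p - 1) * F x) := by
        gcongr
        exact tsum_indicator_zpow_rpow_le (by linarith) _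
    _ = carlesonConst p * F x ^ p := by
        rw [carlesonConst, mul_assoc _ (F x ^ (p - 1)), hpow, mul_assoc]

theorem tsum_setLAverage_rpow_mul_le_of_packing {X ι : Type*} [MeasurableSpace X]
    {μ : Measure X} {D : ι → Set X} {a : ι → ℝ≥0∞} {C : ℝ≥0∞}
    (hlam : ∀ Q R, D Q ⊆ D R ∨ D R ⊆ D Q ∨ Disjoint (D Q) (D R))
    (hD : ∀ Q, MeasurableSet (D Q)) (hpack : ∀ R, ∑' Q : {Q // D Q ⊆ D R}, a Q ≤ C * μ (D R))
    {p : ℝ} (hp : 1 < p) {F : X → ℝ≥0∞} (hF : AEMeasurable F μ)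
    (hA : ∀ Q, ⨍⁻ x in D Q, F x ∂μ ≠ ∞) :
    ∑' Q, (⨍⁻ x in D Q, F x ∂μ) ^ p * a Q ≤ carlesonConst p * C * ∫⁻ x, F x ^ p ∂μ := by
  set A := fun Q => ⨍⁻ x in D Q, F x ∂μ
  set g : ℤ → X → ℝ≥0∞ := fun m x => (2 ^ m)⁻¹ * {x | 2 ^ m < F x}.indicator F x
  have hg : ∀ m, AEMeasurable (g m) μ := fun m =>
    (hF.indicator₀ (nullMeasurableSet_lt aemeasurable_const hF)).const_mul _
  have hweak : ∀ m : ℤ, ∑' Q, {Q | 2 * 2 ^ m < A Q}.indicator a Q ≤ C * ∫⁻ x, g m x ∂μ :=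
    fun m => tsum_indicator_le_mul_lintegral_of_packing hlam hD hpack fun _ hQ =>
      measure_le_lintegral_inv_mul_indicator_of_lt_setLAverage
        (ENNReal.zpow_pos two_ne_zero ofNat_ne_top m).ne' hQ
  calc ∑' Q, A Q ^ p * a Q
      ≤ ∑' Q, ∑' m : ℤ,
          {m : ℤ | 2 * 2 ^ m < A Q}.indicator (fun m => (4 * (2 : ℝ≥0∞) ^ m) ^ p) m * a Q := by
        refine ENNReal.tsum_le_tsum fun Q => ?_
        rw [ENNReal.tsum_mul_right]
        gcongr
        exact rpow_le_tsum_indicator_zpow (hA Q) (by linarith)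
    _ = ∑' m : ℤ, (4 * (2 : ℝ≥0∞) ^ m) ^ p * ∑' Q, {Q | 2 * 2 ^ m < A Q}.indicator a Q := by
        rw [ENNReal.tsum_comm]
        refine tsum_congr fun m => ?_
        rw [← ENNReal.tsum_mul_left]
        refine tsum_congr fun Q => ?_
        by_cases h : 2 * 2 ^ m < A Q <;> simp [indicator, h]
    _ ≤ ∑' m : ℤ, (4 * (2 : ℝ≥0∞) ^ m) ^ p * (C * ∫⁻ x, g m x ∂μ) := by
        gcongr with m
        exact hweak m
    _ = C * ∫⁻ x, ∑' m : ℤ, (4 * (2 : ℝ≥0∞) ^ m) ^ p * g m x ∂μ := by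
        rw [lintegral_tsum fun m => (hg m).const_mul _, ← ENNReal.tsum_mul_left]
        refine tsum_congr fun m => ?_
        rw [lintegral_const_mul'' _ (hg m)]
        ring
    _ ≤ C * ∫⁻ x, carlesonConst p * F x ^ p ∂μ := by
        gcongr with x
        exact tsum_zpow_mul_indicator_le hp F x
    _ = carlesonConst p * C * ∫⁻ x, F x ^ p ∂μ := by
        rw [lintegral_const_mul'' _ (hF.pow_const p)]
        ring

/-- **dyadic Carleson embedding, `L^p` form.** If `{a_Q}` satisfies the
packing condition `∑_{Q ⊆ R} a_Q ≤ c₃ μ(R)` for all dyadic cubes `R`, then for `1 < p < ∞`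
there is `c = c(p,d)` with `∑_Q |m_Q f|^p a_Q ≤ c c₃ ‖f‖_{L^p(μ)}^p` for all `f ∈ L^p(μ)`. -/
theorem statement11 (d : ℕ) (p : ℝ) (hp : 1 < p) :
    ∃ c : ℝ, 0 < c ∧
      ∀ (μ : Measure (EuclideanSpace ℝ (Fin d))), IsLocallyFiniteMeasure μ →
      ∀ (a : ℤ × (Fin d → ℤ) → NNReal) (c₃ : NNReal),
        (∀ R : ℤ × (Fin d → ℤ),
          (∑' Q : {Q : ℤ × (Fin d → ℤ) // dyadicCube d Q ⊆ dyadicCube d R}, (a Q.1 : ℝ≥0∞))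
            ≤ c₃ * μ (dyadicCube d R)) →
        ∀ f : EuclideanSpace ℝ (Fin d) → ℝ, MemLp f (ENNReal.ofReal p) μ →
          (∑' Q : ℤ × (Fin d → ℤ),
              ENNReal.ofReal (|mQ μ (dyadicCube d Q) f| ^ p) * (a Q : ℝ≥0∞))
            ≤ ENNReal.ofReal c * (c₃ : ℝ≥0∞) * eLpNorm f (ENNReal.ofReal p) μ ^ p := by
  refine ⟨(carlesonConst p).toReal,
    ENNReal.toReal_pos (carlesonConst_ne_zero p) (carlesonConst_ne_top hp), ?_⟩
  intro μ _ a c₃ hpack f hf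
  have hp1 : 1 ≤ ENNReal.ofReal p := by simpa using ENNReal.ofReal_le_ofReal hp.le
  have hnorm : eLpNorm f (ENNReal.ofReal p) μ ^ p = ∫⁻ x, ‖f x‖ₑ ^ p ∂μ := by
    have h := eLpNorm_nnreal_pow_eq_lintegral (μ := μ) (f := f) (p := p.toNNReal)
      (by simpa using hp.trans' one_pos)
    rw [Real.coe_toNNReal p (by linarith)] at h
    exact h
  rw [ofReal_toReal (carlesonConst_ne_top hp), hnorm]
  calc ∑' Q, ENNReal.ofReal (|mQ μ (dyadicCube d Q) f| ^ p) * (a Q : ℝ≥0∞)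
      ≤ ∑' Q, (⨍⁻ x in dyadicCube d Q, ‖f x‖ₑ ∂μ) ^ p * a Q := by
        gcongr with Q
        rw [← ENNReal.ofReal_rpow_of_nonneg (abs_nonneg _) (by linarith)]
        gcongr
        exact ofReal_abs_mQ_le_setLAverage μ _ f
    _ ≤ _ := tsum_setLAverage_rpow_mul_le_of_packing dyadicCube_subset_or_subset_or_disjoint
        measurableSet_dyadicCube hpack hp hf.aestronglyMeasurable.enorm
        fun Q => setLAverage_enorm_ne_top hp1 hf _

end
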